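/- arXiv:2602.10601 — 2 statements merged into one kernel-verified Lean document; each statement's English description precedes it below -/
import Mathlib

section
/- Let ℓ ≥ 1 and a_1 ≥ a_2 ≥ … ≥ a_ℓ > 0, and use in every reduced election with t nominees the scoring vector (a_1, …, a_ℓ, 0, …, 0) of length t. Let (S, ℱ, k) be a Hitting Set instance with S = {s_1, …, s_n}, ℱ = {F_1, …, F_m}, and 1 ≤ k ≤ n. Construct the election with parties P = {p}, P_w = {w}, P_i = {s_1^i, …, s_n^i} for each i ∈ [k] (s_r^i being the i-th copy of element s_r), and 4(ℓ−1) further singleton parties whose members are grouped into four sets D_1, D_2, D_3, D_4 of size ℓ−1 each; write F_j^i = {s^i : s ∈ F_j}. The 6m+3 voters are: one voter with order D_1 ≻ w ≻ [rest]; for each j ∈ [m] two voters with order F_j^1 ≻ F_j^2 ≻ … ≻ F_j^k ≻ D_2 ≻ p ≻ [rest]; 2m+1 voters with order w ≻ D_3 ≻ [rest]; and 2m+1 voters with order p ≻ D_4 ≻ [rest], where each displayed set stands for its elements in some fixed order and [rest] denotes all remaining candidates in an arbitrary order. Then, for every choice of these arbitrary orders, p is a necessary president in this election if and only if (S, ℱ)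 admits no hitting set of size at most k. -/
open scoped Classical

noncomputable section

/-- Candidates: `p`, `w`, a candidate `s_r^i` for each copy `i ∈ [k]` of each element
`r ∈ [n]`, and four groups of `ℓ−1` dummies each. -/
inductive HCand (n k ℓ : ℕ) where
  | pp : HCand n k ℓ
  | ww : HCand n k ℓ
  | elem : Fin k → Fin n → HCand n k ℓ
  | dum : Fin 4 → Fin (ℓ - 1) → HCand n k ℓ
  deriving DecidableEq, Fintype

/-- Voters: the voter `w`, two voters `u_j`, `u'_j` for every set `F_j`, `2m+1`
voters of kind `v0`, and `2m+1` voters of kind `v0'`; `6m+3` voters in total. -/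
inductive HVoter (m : ℕ) where
  | w0 : HVoter m
  | u : Fin m → Bool → HVoter m
  | v0 : Fin (2 * m + 1) → HVoter m
  | v0' : Fin (2 * m + 1) → HVoter m
  deriving DecidableEq, Fintype

variable {n k m ℓ : ℕ}

/-- For each voter, the index of the block of candidates a candidate belongs to in
that voter's preference order (blocks are linearly ordered; the order inside a block
is arbitrary).  `F j` is the `j`-th set of the Hitting Set instance. -/
def hgrp (kk : ℕ) (F : Fin m → Finset (Fin n)) : HVoter m → HCand n k ℓ → ℕ
  | .w0, .dum h _ => if h = 0 then 0 else 2
  | .w0, .ww => 1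
  | .w0, _ => 2
  | .u j _, .elem i r => if r ∈ F j then i.val else kk + 2
  | .u _ _, .dum h _ => if h = 1 then kk else kk + 2
  | .u _ _, .pp => kk + 1
  | .u _ _, .ww => kk + 2
  | .v0 _, .ww => 0
  | .v0 _, .dum h _ => if h = 2 then 1 else 2
  | .v0 _, _ => 2
  | .v0' _, .pp => 0
  | .v0' _, .dum h _ => if h = 3 then 1 else 2
  | .v0' _, _ => 2

/-- Each candidate is sent to the index of its party. -/
def hrep : HCand n k ℓ → Unit ⊕ Unit ⊕ Fin k ⊕ (Fin 4 × Fin (ℓ - 1))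
  | .pp => Sum.inl ()
  | .ww => Sum.inr (Sum.inl ())
  | .elem i _ => Sum.inr (Sum.inr (Sum.inl i))
  | .dum h d => Sum.inr (Sum.inr (Sum.inr (h, d)))

/-- The parties: `{p}`, `{w}`, `P_i = {s_1^i, …, s_n^i}` for `i ∈ [k]`, and
singleton dummy parties. -/
def hparties (n k ℓ : ℕ) : Finset (Finset (HCand n k ℓ)) :=
  Finset.univ.image fun c : HCand n k ℓ => Finset.univ.filter fun c' => hrep c' = hrep c

/-- Score of `c` over the nominee set `C'` for the scoring vector `(a 0, a 1, …)`,
where `a k` is the number of points a voter gives to a candidate preceded by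
exactly `k` nominees in her preference order. -/
def posScore {C V : Type*} [Fintype V] (a : ℕ → ℤ) (pref : V → C → C → Prop)
    (C' : Finset C) (c : C) : ℤ :=
  ∑ v : V, a ((C'.filter fun c' => pref v c' c).card)

/-- `C'` contains exactly one nominee of each party of `Ps`. -/
def IsNomineeSet {C : Type*} (Ps : Finset (Finset C)) (C' : Finset C) : Prop :=
  ∀ Pt ∈ Ps, (C' ∩ Pt).card = 1

/-- `p` is a winner of every reduced election containing `p`. -/
def NecessaryPresident {C V : Type*} [Fintype V] (a : ℕ → ℤ)
    (pref : V → C → C → Prop) (Ps : Finset (Finset C)) (p : C) : Prop :=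
  ∀ C' : Finset C, IsNomineeSet Ps C' → p ∈ C' →
    ∀ c ∈ C', posScore a pref C' c ≤ posScore a pref C' p

/-
A reduced election is determined by the nominee `σ i` of each copy party `P_i`, all other parties
being singletons. As the scoring vector vanishes from position `ℓ` on, a voter gives nothing to the
candidates behind her anchor (`w` or `p`) and her `ℓ - 1` dummies. What remains gives `p` the score
`(2m+1)·a 0 + ∑ j, 2·a (h j + ℓ - 1)`, where `h j` counts the copies whose nominee lies in `F j`,
gives `w` the score `(2m+1)·a 0 + a (ℓ - 1)`, and every other candidate at most `(2m+1)·a 0`.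
Hence `p` loses some reduced election iff some `σ` meets every `F j`, i.e. iff a hitting set of
size at most `k` exists.
-/

open Finset

section ScoringVector

variable {a : ℕ → ℤ}

lemma scoringVector_nonneg (hanti : ∀ i j : ℕ, i ≤ j → j < ℓ → a j ≤ a i)
    (hpos : 0 < a (ℓ - 1)) (hzero : ∀ j : ℕ, ℓ ≤ j → a j = 0) (j : ℕ) : 0 ≤ a j := by
  rcases lt_or_ge j ℓ with hj | hj
  · exact hpos.le.trans (hanti j (ℓ - 1) (by omega) (by omega))
  · exact (hzero j hj).ge

lemma scoringVector_antitone (hanti : ∀ i j : ℕ, i ≤ j → j < ℓ → a j ≤ a i)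
    (hpos : 0 < a (ℓ - 1)) (hzero : ∀ j : ℕ, ℓ ≤ j → a j = 0) : Antitone a := by
  intro i j hij
  rcases lt_or_ge j ℓ with hj | hj
  · exact hanti i j hij hj
  · rw [hzero j hj]
    exact scoringVector_nonneg hanti hpos hzero i

end ScoringVector

section PositionalScore

variable {C V : Type*} {pref : V → C → C → Prop}

lemma posScore_le_card_mul [Fintype V] {a : ℕ → ℤ} (ha : Antitone a) (C' : Finset C) (c : C)
    (T : Finset V) (hT : ∀ v ∉ T, a #{x ∈ C' | pref v x c} = 0) :
    posScore a pref C' c ≤ #T * a 0 := by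
  rw [posScore, ← sum_subset (subset_univ T) fun v _ hv => hT v hv]
  calc ∑ v ∈ T, a #{x ∈ C' | pref v x c} ≤ ∑ _v ∈ T, a 0 :=
        sum_le_sum fun v _ => ha (Nat.zero_le _)
    _ = #T * a 0 := by rw [sum_const, nsmul_eq_mul]

variable (g : V → C → ℕ)

lemma filter_lt_subset_filter_pref (hord : ∀ v c c', g v c < g v c' → pref v c c')
    (v : V) (C' : Finset C) (c : C) : {x ∈ C' | g v x < g v c} ⊆ {x ∈ C' | pref v x c} :=
  monotone_filter_right C' fun x _ hx => hord v x c hx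

lemma filter_pref_eq_filter_lt {v : V} (hlin : IsStrictTotalOrder C (pref v))
    (hord : ∀ v c c', g v c < g v c' → pref v c c') {C' : Finset C} {c : C}
    (hc : ∀ x, g v x = g v c → x = c) : {x ∈ C' | pref v x c} = {x ∈ C' | g v x < g v c} := by
  have := hlin
  refine filter_congr fun x _ => ⟨fun hxc => ?_, hord v x c⟩
  rcases lt_trichotomy (g v x) (g v c) with hlt | heq | hgt
  · exact hlt
  · exact absurd (hc x heq ▸ hxc) (irrefl_of (pref v) c)
  · exact absurd (hord v c x hgt) (asymm hxc)

end PositionalScore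

lemma isNomineeSet_fibers_iff {C ι : Type*} [Fintype C] [DecidableEq C] [DecidableEq ι]
    (f : C → ι) (C' : Finset C) :
    IsNomineeSet (univ.image fun c => univ.filter fun c' => f c' = f c) C' ↔
      ∀ c, ∃! x, x ∈ C' ∧ f x = f c := by
  simp only [IsNomineeSet, forall_mem_image, mem_univ, forall_const, inter_filter, inter_univ,
    card_eq_one_iff_existsUnique, mem_filter]

lemma Finset.exists_fin_cover {α : Type*} (s : Finset α) (hs : #s ≤ k) (d : Fin k → α) :
    ∃ σ : Fin k → α, ∀ x ∈ s, ∃ i, σ i = x := by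
  let e : s ↪ Fin k := s.equivFin.toEmbedding.trans (Fin.castLEEmb hs)
  exact ⟨Function.extend e Subtype.val d, fun x hx => ⟨e ⟨x, hx⟩, e.injective.extend_apply _ _ _⟩⟩

def IsNominee (σ : Fin k → Fin n) : HCand n k ℓ → Prop
  | .elem i r => r = σ i
  | _ => True

def nominees (σ : Fin k → Fin n) : Finset (HCand n k ℓ) :=
  univ.filter (IsNominee σ)

@[simp] lemma mem_nominees {σ : Fin k → Fin n} {c : HCand n k ℓ} :
    c ∈ nominees σ ↔ IsNominee σ c := by
  simp [nominees]

lemma isNomineeSet_nominees (σ : Fin k → Fin n) :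
    IsNomineeSet (hparties n k ℓ) (nominees σ) := by
  rw [hparties, isNomineeSet_fibers_iff]
  rintro (_ | _ | ⟨i, r⟩ | ⟨h, d⟩)
  · exact ⟨.pp, by simp [hrep, IsNominee], fun x => by cases x <;> simp [hrep]⟩
  · exact ⟨.ww, by simp [hrep, IsNominee], fun x => by cases x <;> simp [hrep]⟩
  · refine ⟨.elem i (σ i), by simp [hrep, IsNominee], fun x => ?_⟩
    rcases x with _ | _ | ⟨i', r'⟩ | _ <;> simp [hrep, IsNominee]
    rintro rfl rfl
    exact ⟨rfl, rfl⟩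
  · exact ⟨.dum h d, by simp [hrep, IsNominee], fun x => by cases x <;> simp [hrep]⟩

lemma exists_eq_nominees (hkn : k ≤ n) {C' : Finset (HCand n k ℓ)}
    (hC : IsNomineeSet (hparties n k ℓ) C') : ∃ σ : Fin k → Fin n, C' = nominees σ := by
  rw [hparties, isNomineeSet_fibers_iff] at hC
  have hσ : ∀ i : Fin k, ∃ r, HCand.elem i r ∈ C' := fun i => by
    obtain ⟨x, ⟨hx, hxi⟩, -⟩ := hC (.elem i (Fin.castLE hkn i))
    rcases x with _ | _ | ⟨i', r⟩ | _ <;> simp only [hrep, reduceCtorEq, Sum.inr.injEq,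
      Sum.inl.injEq] at hxi
    exact ⟨r, hxi ▸ hx⟩
  choose σ hσ using hσ
  refine ⟨σ, ext fun c => ?_⟩
  rcases c with _ | _ | ⟨i, r⟩ | ⟨h, d⟩
  · obtain ⟨x, ⟨hx, hxc⟩, -⟩ := hC .pp
    cases x <;> simp_all [hrep, IsNominee]
  · obtain ⟨x, ⟨hx, hxc⟩, -⟩ := hC .ww
    cases x <;> simp_all [hrep, IsNominee]
  · simp only [mem_nominees, IsNominee]
    refine ⟨fun hr => ?_, fun hr => hr ▸ hσ i⟩
    simpa using (hC (.elem i r)).unique ⟨hr, rfl⟩ ⟨hσ i, rfl⟩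
  · obtain ⟨x, ⟨hx, hxc⟩, -⟩ := hC (.dum h d)
    cases x <;> simp_all [hrep, IsNominee]

def hCandEquiv (n k ℓ : ℕ) :
    (Unit ⊕ Unit) ⊕ (Fin k × Fin n ⊕ Fin 4 × Fin (ℓ - 1)) ≃ HCand n k ℓ where
  toFun
    | .inl (.inl _) => .pp
    | .inl (.inr _) => .ww
    | .inr (.inl (i, r)) => .elem i r
    | .inr (.inr (h, d)) => .dum h d
  invFun
    | .pp => .inl (.inl ())
    | .ww => .inl (.inr ())
    | .elem i r => .inr (.inl (i, r))
    | .dum h d => .inr (.inr (h, d))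
  left_inv x := by rcases x with (_ | _) | (_ | _) <;> rfl
  right_inv c := by cases c <;> rfl

lemma card_filter_nominees (σ : Fin k → Fin n) (P : HCand n k ℓ → Prop) [DecidablePred P] :
    #{x ∈ nominees σ | P x} = (if P .pp then 1 else 0) + (if P .ww then 1 else 0)
      + #{i | P (.elem i (σ i))} + ∑ h, #{d | P (.dum h d)} := by
  rw [nominees, filter_filter, card_filter, ← (hCandEquiv n k ℓ).sum_comp]
  simp only [Fintype.sum_sum_type, Fintype.sum_prod_type, IsNominee, hCandEquiv, Equiv.coe_fn_mk,
    Fintype.univ_unit, sum_singleton, true_and, add_assoc, card_filter]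
  congr 3
  refine sum_congr rfl fun i _ => ?_
  rw [Fintype.sum_eq_single (σ i) fun r hr => by simp [hr]]
  simp

def hVoterEquiv (m : ℕ) :
    (Unit ⊕ Fin m × Bool) ⊕ (Fin (2 * m + 1) ⊕ Fin (2 * m + 1)) ≃ HVoter m where
  toFun
    | .inl (.inl _) => .w0
    | .inl (.inr (j, b)) => .u j b
    | .inr (.inl i) => .v0 i
    | .inr (.inr i) => .v0' i
  invFun
    | .w0 => .inl (.inl ())
    | .u j b => .inl (.inr (j, b))
    | .v0 i => .inr (.inl i)
    | .v0' i => .inr (.inr i)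
  left_inv x := by rcases x with (_ | _) | (_ | _) <;> rfl
  right_inv v := by cases v <;> rfl

lemma sum_hVoter (f : HVoter m → ℤ) :
    ∑ v, f v = f .w0 + ∑ j, (f (.u j true) + f (.u j false))
      + ∑ i, f (.v0 i) + ∑ i, f (.v0' i) := by
  rw [← (hVoterEquiv m).sum_comp]
  simp [Fintype.sum_sum_type, Fintype.sum_prod_type, hVoterEquiv, add_assoc]

def hitCount (F : Fin m → Finset (Fin n)) (σ : Fin k → Fin n) (j : Fin m) : ℕ :=
  #{i | σ i ∈ F j}

lemma exists_forall_hitCount_pos_iff (F : Fin m → Finset (Fin n)) (hkn : k ≤ n) :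
    (∃ σ : Fin k → Fin n, ∀ j, 0 < hitCount F σ j) ↔
      ∃ S' : Finset (Fin n), #S' ≤ k ∧ ∀ j, ∃ s ∈ S', s ∈ F j := by
  constructor
  · rintro ⟨σ, hσ⟩
    refine ⟨univ.image σ, card_image_le.trans (card_univ.trans (Fintype.card_fin k)).le,
      fun j => ?_⟩
    obtain ⟨i, hi⟩ := card_pos.1 (hσ j)
    exact ⟨σ i, mem_image_of_mem σ (mem_univ i), (mem_filter.1 hi).2⟩
  · rintro ⟨S', hcard, hhit⟩
    obtain ⟨σ, hσ⟩ := S'.exists_fin_cover hcard (Fin.castLE hkn)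
    refine ⟨σ, fun j => ?_⟩
    obtain ⟨s, hs, hsF⟩ := hhit j
    obtain ⟨i, rfl⟩ := hσ s hs
    exact card_pos.2 ⟨i, mem_filter.2 ⟨mem_univ i, hsF⟩⟩

def anchor : HVoter m → HCand n k ℓ
  | .w0 | .v0 _ => .ww
  | .u _ _ | .v0' _ => .pp

def lastBlock (k : ℕ) : HVoter m → ℕ
  | .u _ _ => k + 2
  | _ => 2

section ReducedElection

variable {F : Fin m → Finset (Fin n)} {a : ℕ → ℤ}
  {pref : HVoter m → HCand n k ℓ → HCand n k ℓ → Prop}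

lemma eq_anchor_of_hgrp_eq {v : HVoter m} {x : HCand n k ℓ}
    (h : hgrp k F v x = hgrp k F v (anchor v : HCand n k ℓ)) : x = anchor v := by
  rcases v with _ | _ | _ | _ <;> rcases x with _ | _ | ⟨i, r⟩ | ⟨h, d⟩ <;>
    simp only [hgrp, anchor] at h ⊢ <;> (try split_ifs at h) <;> omega

lemma card_nominees_before_pp (σ : Fin k → Fin n) (j : Fin m) (b : Bool) :
    #{x ∈ (nominees σ : Finset (HCand n k ℓ)) |
        hgrp k F (.u j b) x < hgrp k F (.u j b) (.pp : HCand n k ℓ)} =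
      hitCount F σ j + (ℓ - 1) := by
  rw [card_filter_nominees]
  simp [hgrp, Fin.sum_univ_four, hitCount, apply_ite (· ≤ k), Fin.is_le']

lemma card_nominees_before_ww (σ : Fin k → Fin n) :
    #{x ∈ (nominees σ : Finset (HCand n k ℓ)) |
        hgrp k F .w0 x < hgrp k F .w0 (.ww : HCand n k ℓ)} = ℓ - 1 := by
  rw [card_filter_nominees]
  simp [hgrp, Fin.sum_univ_four]

lemma le_card_nominees_before_lastBlock (σ : Fin k → Fin n) (v : HVoter m) :
    ℓ ≤ #{x ∈ (nominees σ : Finset (HCand n k ℓ)) | hgrp k F v x < lastBlock k v} := by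
  rw [card_filter_nominees]
  cases v <;> simp [hgrp, lastBlock, Fin.sum_univ_four] <;> omega

lemma points_eq_zero_of_lastBlock (hzero : ∀ j : ℕ, ℓ ≤ j → a j = 0)
    (hord : ∀ v c c', hgrp k F v c < hgrp k F v c' → pref v c c') (σ : Fin k → Fin n)
    {v : HVoter m} {c : HCand n k ℓ} (hc : hgrp k F v c = lastBlock k v) :
    a #{x ∈ nominees σ | pref v x c} = 0 := by
  refine hzero _ ((le_card_nominees_before_lastBlock (F := F) σ v).trans (card_le_card ?_))
  rw [← hc]
  exact filter_lt_subset_filter_pref _ hord v _ c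

lemma posScore_pp (hlin : ∀ v, IsStrictTotalOrder (HCand n k ℓ) (pref v))
    (hord : ∀ v c c', hgrp k F v c < hgrp k F v c' → pref v c c')
    (hzero : ∀ j : ℕ, ℓ ≤ j → a j = 0) (σ : Fin k → Fin n) :
    posScore a pref (nominees σ) .pp =
      (2 * m + 1) * a 0 + ∑ j, 2 * a (hitCount F σ j + (ℓ - 1)) := by
  have hw0 : a #{x ∈ nominees σ | pref .w0 x .pp} = 0 :=
    points_eq_zero_of_lastBlock hzero hord σ rfl
  have hu (j : Fin m) (b : Bool) :
      a #{x ∈ nominees σ | pref (.u j b) x .pp} = a (hitCount F σ j + (ℓ - 1)) := by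
    rw [filter_pref_eq_filter_lt _ (hlin _) hord (c := .pp) fun _ => eq_anchor_of_hgrp_eq,
      card_nominees_before_pp]
  have hv0 (i : Fin (2 * m + 1)) : a #{x ∈ nominees σ | pref (.v0 i) x .pp} = 0 :=
    points_eq_zero_of_lastBlock hzero hord σ rfl
  have hv0' (i : Fin (2 * m + 1)) : a #{x ∈ nominees σ | pref (.v0' i) x .pp} = a 0 := by
    rw [filter_pref_eq_filter_lt _ (hlin _) hord (c := .pp) fun _ => eq_anchor_of_hgrp_eq]
    simp [hgrp]
  rw [posScore, sum_hVoter, hw0]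
  simp only [hu, hv0, hv0', sum_const_zero, sum_const, card_univ, Fintype.card_fin, nsmul_eq_mul]
  push_cast
  simp only [← two_mul]
  ring

lemma posScore_ww (hlin : ∀ v, IsStrictTotalOrder (HCand n k ℓ) (pref v))
    (hord : ∀ v c c', hgrp k F v c < hgrp k F v c' → pref v c c')
    (hzero : ∀ j : ℕ, ℓ ≤ j → a j = 0) (σ : Fin k → Fin n) :
    posScore a pref (nominees σ) .ww = (2 * m + 1) * a 0 + a (ℓ - 1) := by
  have hw0 : a #{x ∈ nominees σ | pref .w0 x .ww} = a (ℓ - 1) := by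
    rw [filter_pref_eq_filter_lt _ (hlin _) hord (c := .ww) fun _ => eq_anchor_of_hgrp_eq,
      card_nominees_before_ww]
  have hu (j : Fin m) (b : Bool) : a #{x ∈ nominees σ | pref (.u j b) x .ww} = 0 :=
    points_eq_zero_of_lastBlock hzero hord σ rfl
  have hv0 (i : Fin (2 * m + 1)) : a #{x ∈ nominees σ | pref (.v0 i) x .ww} = a 0 := by
    rw [filter_pref_eq_filter_lt _ (hlin _) hord (c := .ww) fun _ => eq_anchor_of_hgrp_eq]
    simp [hgrp]
  have hv0' (i : Fin (2 * m + 1)) : a #{x ∈ nominees σ | pref (.v0' i) x .ww} = 0 :=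
    points_eq_zero_of_lastBlock hzero hord σ rfl
  rw [posScore, sum_hVoter, hw0]
  simp only [hu, hv0, hv0', add_zero, sum_const_zero, sum_const, card_univ, Fintype.card_fin,
    nsmul_eq_mul]
  push_cast
  ring

lemma card_voters_ne_lastBlock_le {c : HCand n k ℓ} (hp : c ≠ .pp) (hw : c ≠ .ww) :
    #{v : HVoter m | hgrp k F v c ≠ lastBlock k v} ≤ 2 * m + 1 := by
  have key (T : Finset (HVoter m)) (hT : #T ≤ 2 * m + 1)
      (hc : ∀ v, hgrp k F v c ≠ lastBlock k v → v ∈ T) :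
      #{v : HVoter m | hgrp k F v c ≠ lastBlock k v} ≤ 2 * m + 1 :=
    (card_le_card fun v hv => hc v (mem_filter.1 hv).2).trans hT
  have hcard_u : #(univ.image fun x : Fin m × Bool => HVoter.u x.1 x.2) ≤ 2 * m + 1 :=
    card_image_le.trans (by simp; omega)
  rcases c with _ | _ | ⟨i, r⟩ | ⟨h, d⟩
  · contradiction
  · contradiction
  · exact key _ hcard_u (by rintro (_ | ⟨j, b⟩ | _ | _) <;> simp [hgrp, lastBlock])
  · fin_cases h
    · exact key {.w0} (by simp) (by rintro (_ | ⟨j, b⟩ | _ | _) <;> simp [hgrp, lastBlock])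
    · exact key _ hcard_u (by rintro (_ | ⟨j, b⟩ | _ | _) <;> simp [hgrp, lastBlock])
    · exact key (univ.image .v0) (card_image_le.trans (by simp))
        (by rintro (_ | ⟨j, b⟩ | _ | _) <;> simp [hgrp, lastBlock])
    · exact key (univ.image .v0') (card_image_le.trans (by simp))
        (by rintro (_ | ⟨j, b⟩ | _ | _) <;> simp [hgrp, lastBlock])

lemma posScore_le_of_ne (ha : Antitone a) (ha0 : 0 ≤ a 0) (hzero : ∀ j : ℕ, ℓ ≤ j → a j = 0)
    (hord : ∀ v c c', hgrp k F v c < hgrp k F v c' → pref v c c') (σ : Fin k → Fin n)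
    {c : HCand n k ℓ} (hp : c ≠ .pp) (hw : c ≠ .ww) :
    posScore a pref (nominees σ) c ≤ (2 * m + 1) * a 0 :=
  calc posScore a pref (nominees σ) c ≤ #{v : HVoter m | hgrp k F v c ≠ lastBlock k v} * a 0 :=
        posScore_le_card_mul ha _ c _ fun v hv =>
          points_eq_zero_of_lastBlock hzero hord σ (by simpa using hv)
    _ ≤ (2 * m + 1) * a 0 :=
        mul_le_mul_of_nonneg_right (by exact_mod_cast card_voters_ne_lastBlock_le hp hw) ha0

lemma posScore_pp_lt_posScore_ww (hlin : ∀ v, IsStrictTotalOrder (HCand n k ℓ) (pref v))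
    (hord : ∀ v c c', hgrp k F v c < hgrp k F v c' → pref v c c')
    (hpos : 0 < a (ℓ - 1)) (hzero : ∀ j : ℕ, ℓ ≤ j → a j = 0) {σ : Fin k → Fin n}
    (hσ : ∀ j, 0 < hitCount F σ j) :
    posScore a pref (nominees σ) .pp < posScore a pref (nominees σ) .ww := by
  have hhit (j : Fin m) : a (hitCount F σ j + (ℓ - 1)) = 0 := hzero _ (by have := hσ j; omega)
  rw [posScore_pp hlin hord hzero, posScore_ww hlin hord hzero]
  simp only [hhit, mul_zero, sum_const_zero]
  linarith

lemma posScore_le_posScore_pp (hlin : ∀ v, IsStrictTotalOrder (HCand n k ℓ) (pref v))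
    (hord : ∀ v c c', hgrp k F v c < hgrp k F v c' → pref v c c')
    (hanti : ∀ i j : ℕ, i ≤ j → j < ℓ → a j ≤ a i) (hpos : 0 < a (ℓ - 1))
    (hzero : ∀ j : ℕ, ℓ ≤ j → a j = 0) {σ : Fin k → Fin n} {j : Fin m}
    (hj : hitCount F σ j = 0) (c : HCand n k ℓ) :
    posScore a pref (nominees σ) c ≤ posScore a pref (nominees σ) .pp := by
  have ha0 := scoringVector_nonneg hanti hpos hzero
  have hpp : (2 * m + 1) * a 0 + 2 * a (ℓ - 1) ≤ posScore a pref (nominees σ) .pp := by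
    rw [posScore_pp hlin hord hzero]
    have := single_le_sum (fun j _ => mul_nonneg zero_le_two (ha0 _))
      (f := fun j => 2 * a (hitCount F σ j + (ℓ - 1))) (mem_univ j)
    simp only [hj, zero_add] at this
    linarith
  by_cases hcp : c = .pp
  · rw [hcp]
  by_cases hcw : c = .ww
  · rw [hcw, posScore_ww hlin hord hzero]
    linarith
  · linarith [posScore_le_of_ne (scoringVector_antitone hanti hpos hzero) (ha0 0) hzero hord σ
      hcp hcw]

end ReducedElection

theorem short_rule_necessary_president_iff_no_hitting_set_general
    (n m k ℓ : ℕ) (hkn : k ≤ n)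
    (F : Fin m → Finset (Fin n))
    -- the scoring vector: `a j` is the points for position `j+1`
    (a : ℕ → ℤ)
    (hanti : ∀ i j : ℕ, i ≤ j → j < ℓ → a j ≤ a i)
    (hpos : 0 < a (ℓ - 1))
    (hzero : ∀ j : ℕ, ℓ ≤ j → a j = 0)
    -- the preference orders, consistent with the prescribed blocks
    (pref : HVoter m → HCand n k ℓ → HCand n k ℓ → Prop)
    (hlin : ∀ v, IsStrictTotalOrder (HCand n k ℓ) (pref v))
    (hord : ∀ v c c', hgrp k F v c < hgrp k F v c' → pref v c c') :
    NecessaryPresident a pref (hparties n k ℓ) HCand.pp ↔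
      ¬ ∃ S' : Finset (Fin n), S'.card ≤ k ∧ ∀ j : Fin m, ∃ s ∈ S', s ∈ F j := by
  rw [← exists_forall_hitCount_pos_iff F hkn]
  constructor
  · rintro hNP ⟨σ, hσ⟩
    refine (posScore_pp_lt_posScore_ww hlin hord hpos hzero hσ).not_ge ?_
    exact hNP _ (isNomineeSet_nominees σ) (by simp [IsNominee]) _ (by simp [IsNominee])
  · intro hno C' hC _ c _
    obtain ⟨σ, rfl⟩ := exists_eq_nominees hkn hC
    obtain ⟨j, hj⟩ : ∃ j, hitCount F σ j = 0 := by simpa using not_exists.1 hno σ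
    exact posScore_le_posScore_pp hlin hord hanti hpos hzero hj c

/-- for every short scoring rule `(a_1, …, a_ℓ, 0, …, 0)` with
`a_1 ≥ … ≥ a_ℓ > 0`, in the election constructed from a Hitting Set instance
`(S, ℱ, k)`, the candidate `p` is a necessary president iff the instance admits no
hitting set of size at most `k`. -/
theorem short_rule_necessary_president_iff_no_hitting_set
    (n m k ℓ : ℕ) (hℓ : 1 ≤ ℓ) (hk : 1 ≤ k) (hkn : k ≤ n)
    (F : Fin m → Finset (Fin n))
    -- the scoring vector: `a j` is the points for position `j+1`
    (a : ℕ → ℤ)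
    (hanti : ∀ i j : ℕ, i ≤ j → j < ℓ → a j ≤ a i)
    (hpos : 0 < a (ℓ - 1))
    (hzero : ∀ j : ℕ, ℓ ≤ j → a j = 0)
    -- the preference orders, consistent with the prescribed blocks
    (pref : HVoter m → HCand n k ℓ → HCand n k ℓ → Prop)
    (hlin : ∀ v, IsStrictTotalOrder (HCand n k ℓ) (pref v))
    (hord : ∀ v c c', hgrp k F v c < hgrp k F v c' → pref v c c') :
    NecessaryPresident a pref (hparties n k ℓ) HCand.pp ↔
      ¬ ∃ S' : Finset (Fin n), S'.card ≤ k ∧ ∀ j : Fin m, ∃ s ∈ S', s ∈ F j :=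
  short_rule_necessary_president_iff_no_hitting_set_general n m k ℓ hkn F a hanti hpos hzero pref
    hlin hord
end
end

section
/- Let ℓ ≥ 1 and a > a_1 ≥ a_2 ≥ … ≥ a_ℓ, and use in every reduced election with t nominees the scoring vector (a, …, a, a_1, a_2, …, a_ℓ) of length t. Let E be an election over candidate set C with party partition 𝒫 of size t = |𝒫|, let p ∈ P ∈ 𝒫, and let τ be the number of distinct preference orders occurring among the voters. If t > ℓτ, then p is a necessary president if and only if for every voter v it holds that |{P̃ ∈ 𝒫 \ {P} : there exists c ∈ P̃ with c ≻_v p}| < t − ℓ. -/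
/-!
A voter gives a nominee the top score `a` exactly when at least `ℓ` nominees are ranked below
it, and strictly less otherwise. If every voter sees fewer than `t − ℓ` rival parties with a
candidate above `p`, then in every reduced election each voter ranks at least `ℓ` nominees
below `p`, so `p` collects the maximal score `a` from everybody. Conversely, if some voter `v`
sees at least `t − ℓ` such parties, nominate from each of them a candidate that `v` prefers to
`p`, so that `p` falls into the bottom `ℓ` of `v`. Each of the `τ` distinct orders has only `ℓ`
nominees in its bottom `ℓ`; as `t > ℓτ`, some nominee is in none of them, and it gets `a` from
every voter, strictly beating `p`.
-/

open scoped Classical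

noncomputable section

/-- Score of `c` in the reduced election over `C'` under the Veto-like scoring vector
`(a, …, a, a_1, …, a_ℓ)`: a voter ranking `b` nominees below `c` contributes `a`
points if `b ≥ ℓ`, and `as b` points otherwise, where `as b = a_{ℓ−b}` (so `as 0` is
the last entry `a_ℓ` and `as (ℓ−1) = a_1`). -/
def vetoScore {C V : Type*} [Fintype V] (ℓ : ℕ) (a : ℤ) (as : ℕ → ℤ)
    (pref : V → C → C → Prop) (C' : Finset C) (c : C) : ℤ :=
  ∑ v : V,
    (if ℓ ≤ (C'.filter fun c' => pref v c c').card then a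
     else as ((C'.filter fun c' => pref v c c').card))

/-- `Ps` is a partition of the candidate set into nonempty parties. -/
def IsPartition {C : Type*} [Fintype C] (Ps : Finset (Finset C)) : Prop :=
  (∀ Pt ∈ Ps, Pt.Nonempty) ∧ ∀ c : C, ∃! Pt, Pt ∈ Ps ∧ c ∈ Pt

/-- `p` is a winner of every reduced election containing `p`, under the given
Veto-like scoring rule. -/
def NecessaryPresidentVeto {C V : Type*} [Fintype V] (ℓ : ℕ) (a : ℤ) (as : ℕ → ℤ)
    (pref : V → C → C → Prop) (Ps : Finset (Finset C)) (p : C) : Prop :=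
  ∀ C' : Finset C, IsNomineeSet Ps C' → p ∈ C' →
    ∀ c ∈ C', vetoScore ℓ a as pref C' c ≤ vetoScore ℓ a as pref C' p

open Finset

section Rank

variable {C : Type*} (r : C → C → Prop)

def numBelow (s : Finset C) (c : C) : ℕ := #{x ∈ s | r c x}

variable {r} [IsStrictTotalOrder C r] {s : Finset C}

theorem numBelow_lt_numBelow {c c' : C} (hc' : c' ∈ s) (h : r c c') :
    numBelow r s c' < numBelow r s c := by
  refine card_lt_card ⟨fun x hx => ?_, fun hsub => irrefl c' (mem_filter.1 (hsub ?_)).2⟩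
  · obtain ⟨hxs, hx⟩ := mem_filter.1 hx
    exact mem_filter.2 ⟨hxs, _root_.trans h hx⟩
  · exact mem_filter.2 ⟨hc', h⟩

theorem numBelow_injOn : Set.InjOn (numBelow r s) s := by
  intro c hc c' hc' heq
  rcases trichotomous_of r c c' with h | h | h
  · exact absurd heq (numBelow_lt_numBelow hc' h).ne'
  · exact h
  · exact absurd heq (numBelow_lt_numBelow hc h).ne

theorem card_filter_numBelow_lt_le (ℓ : ℕ) : #{c ∈ s | numBelow r s c < ℓ} ≤ ℓ := by
  simpa using card_le_card_of_injOn (t := range ℓ) (numBelow r s)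
    (fun c hc => mem_range.2 (mem_filter.1 hc).2)
    (numBelow_injOn.mono fun c hc => (mem_filter.1 hc).1)

theorem numBelow_add_card_filter_add_one {p : C} (hp : p ∈ s) :
    numBelow r s p + #{x ∈ s | r x p} + 1 = #s := by
  have hdisj : Disjoint {x ∈ s | r p x} {x ∈ s | r x p} :=
    disjoint_filter.2 fun _ _ h h' => asymm h h'
  have hunion : {x ∈ s | r p x} ∪ {x ∈ s | r x p} = s.erase p := by
    ext x
    simp only [mem_union, mem_filter, mem_erase]
    rcases trichotomous_of r p x with h | rfl | h
    · have := ne_of_irrefl' h; tauto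
    · simp [irrefl]
    · have := ne_of_irrefl h; tauto
  rw [numBelow, ← card_union_of_disjoint hdisj, hunion, card_erase_add_one hp]

end Rank

theorem exists_forall_le_numBelow_of_mul_card_lt {C : Type*} {s : Finset C}
    {T : Finset (C → C → Prop)} (hT : ∀ r ∈ T, IsStrictTotalOrder C r) {ℓ : ℕ}
    (h : ℓ * #T < #s) :
    ∃ c ∈ s, ∀ r ∈ T, ℓ ≤ numBelow r s c := by
  set bottom := T.biUnion fun r => {c ∈ s | numBelow r s c < ℓ}
  have hcard : #bottom < #s :=
    calc #bottom ≤ ∑ r ∈ T, #{c ∈ s | numBelow r s c < ℓ} := card_biUnion_le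
      _ ≤ ∑ _r ∈ T, ℓ := sum_le_sum fun r hr => by
          have := hT r hr; exact card_filter_numBelow_lt_le ℓ
      _ = ℓ * #T := by rw [sum_const, smul_eq_mul, mul_comm]
      _ < #s := h
  obtain ⟨c, hc, hcb⟩ := exists_mem_notMem_of_card_lt_card hcard
  refine ⟨c, hc, fun r hr => not_lt.1 fun hlt => hcb ?_⟩
  exact mem_biUnion.2 ⟨r, hr, mem_filter.2 ⟨hc, hlt⟩⟩

section Parties

variable {C : Type*} [Fintype C] {Ps : Finset (Finset C)} {C' : Finset C}

theorem isNomineeSet_image (hpart : IsPartition Ps) {f : Finset C → C}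
    (hf : ∀ Pt ∈ Ps, f Pt ∈ Pt) : IsNomineeSet Ps (Ps.image f) := by
  intro Pt hPt
  refine card_eq_one.2 ⟨f Pt, ext fun x => ?_⟩
  simp only [mem_inter, mem_image, mem_singleton]
  constructor
  · rintro ⟨⟨Pt', hPt', rfl⟩, hx⟩
    rw [(hpart.2 _).unique ⟨hPt', hf Pt' hPt'⟩ ⟨hPt, hx⟩]
  · rintro rfl
    exact ⟨⟨Pt, hPt, rfl⟩, hf Pt hPt⟩

theorem IsNomineeSet.card_filter_eq (hpart : IsPartition Ps) (hnom : IsNomineeSet Ps C')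
    (q : C → Prop) : #{x ∈ C' | q x} = #{Pt ∈ Ps | ∃ c ∈ C' ∩ Pt, q c} := by
  choose party hparty using fun c => (hpart.2 c).exists
  refine card_nbij party (fun x hx => ?_) (fun x hx y hy hxy => ?_) (fun Pt hPt => ?_)
  · obtain ⟨hxC', hqx⟩ := mem_filter.1 hx
    exact mem_filter.2 ⟨(hparty x).1, x, mem_inter.2 ⟨hxC', (hparty x).2⟩, hqx⟩
  · refine card_le_one.1 (hnom _ (hparty x).1).le x ?_ y ?_
    · exact mem_inter.2 ⟨(mem_filter.1 hx).1, (hparty x).2⟩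
    · exact mem_inter.2 ⟨(mem_filter.1 hy).1, hxy ▸ (hparty y).2⟩
  · obtain ⟨hPt, c, hc, hqc⟩ := mem_filter.1 hPt
    obtain ⟨hcC', hcPt⟩ := mem_inter.1 hc
    exact ⟨c, mem_filter.2 ⟨hcC', hqc⟩, (hpart.2 c).unique (hparty c) ⟨hPt, hcPt⟩⟩

theorem IsNomineeSet.card_eq (hpart : IsPartition Ps) (hnom : IsNomineeSet Ps C') :
    #C' = #Ps := by
  convert hnom.card_filter_eq hpart (fun _ => True) using 2
  · simp
  ext Pt
  simp only [mem_filter, and_true, iff_self_and]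
  exact fun hPt => card_pos.1 ((hnom Pt hPt).symm ▸ one_pos)

variable {P : Finset C} {p : C}

theorem IsNomineeSet.card_filter_le (hpart : IsPartition Ps) (hnom : IsNomineeSet Ps C')
    (hP : P ∈ Ps) (hp : p ∈ P) (hpC' : p ∈ C') {q : C → Prop} (hq : ¬q p) :
    #{x ∈ C' | q x} ≤ #{Pt ∈ Ps \ {P} | ∃ c ∈ Pt, q c} := by
  rw [hnom.card_filter_eq hpart]
  refine card_le_card fun Pt hPt => ?_
  obtain ⟨hPt, c, hc, hqc⟩ := mem_filter.1 hPt
  obtain ⟨hcC', hcPt⟩ := mem_inter.1 hc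
  refine mem_filter.2 ⟨mem_sdiff.2 ⟨hPt, fun hPtP => hq ?_⟩, c, hcPt, hqc⟩
  rw [mem_singleton] at hPtP
  subst hPtP
  rwa [card_le_one.1 (hnom Pt hPt).le p (mem_inter.2 ⟨hpC', hp⟩) c
    (mem_inter.2 ⟨hcC', hcPt⟩)]

theorem exists_isNomineeSet_card_filter_ge (hpart : IsPartition Ps) (hP : P ∈ Ps)
    (hp : p ∈ P) (q : C → Prop) : ∃ C', IsNomineeSet Ps C' ∧ p ∈ C' ∧
      #{Pt ∈ Ps \ {P} | ∃ c ∈ Pt, q c} ≤ #{x ∈ C' | q x} := by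
  have hchoice : ∀ Pt ∈ Ps, ∃ c ∈ Pt,
      (Pt = P → c = p) ∧ (Pt ≠ P → (∃ c ∈ Pt, q c) → q c) := by
    intro Pt hPt
    by_cases hPtP : Pt = P
    · exact ⟨p, hPtP ▸ hp, fun _ => rfl, fun h => absurd hPtP h⟩
    by_cases hq : ∃ c ∈ Pt, q c
    · obtain ⟨c, hc, hqc⟩ := hq
      exact ⟨c, hc, fun h => absurd h hPtP, fun _ _ => hqc⟩
    · obtain ⟨c, hc⟩ := hpart.1 Pt hPt
      exact ⟨c, hc, fun h => absurd h hPtP, fun _ h => absurd h hq⟩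
  have : Nonempty C := ⟨p⟩
  choose! f hfmem hfp hfq using hchoice
  have hnom := isNomineeSet_image hpart hfmem
  refine ⟨Ps.image f, hnom, mem_image.2 ⟨P, hP, hfp P hP rfl⟩, ?_⟩
  rw [hnom.card_filter_eq hpart]
  refine card_le_card fun Pt hPt => ?_
  obtain ⟨hPt, hq⟩ := mem_filter.1 hPt
  obtain ⟨hPs, hPtP⟩ := mem_sdiff.1 hPt
  refine mem_filter.2 ⟨hPs, f Pt, mem_inter.2 ⟨mem_image_of_mem f hPs, hfmem Pt hPs⟩, ?_⟩
  exact hfq Pt hPs (by simpa using hPtP) hq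

end Parties

section Scores

variable {C V : Type*} [Fintype V] {ℓ : ℕ} {a : ℤ} {as : ℕ → ℤ}

def vetoPoints (ℓ : ℕ) (a : ℤ) (as : ℕ → ℤ) (b : ℕ) : ℤ := if ℓ ≤ b then a else as b

theorem vetoScore_eq_sum (pref : V → C → C → Prop) (C' : Finset C) (c : C) :
    vetoScore ℓ a as pref C' c = ∑ v, vetoPoints ℓ a as (numBelow (pref v) C' c) := rfl

theorem vetoPoints_of_le {b : ℕ} (hb : ℓ ≤ b) : vetoPoints ℓ a as b = a := if_pos hb

theorem vetoPoints_lt_of_lt (hmono : ∀ i j : ℕ, i ≤ j → j < ℓ → as i ≤ as j)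
    (htop : as (ℓ - 1) < a) {b : ℕ} (hb : b < ℓ) : vetoPoints ℓ a as b < a := by
  rw [vetoPoints, if_neg hb.not_ge]
  exact (hmono b (ℓ - 1) (by omega) (by omega)).trans_lt htop

theorem vetoPoints_le (hmono : ∀ i j : ℕ, i ≤ j → j < ℓ → as i ≤ as j)
    (htop : as (ℓ - 1) < a) (b : ℕ) : vetoPoints ℓ a as b ≤ a := by
  by_cases hb : ℓ ≤ b
  · exact (vetoPoints_of_le hb).le
  · exact (vetoPoints_lt_of_lt hmono htop (not_le.1 hb)).le

variable {pref : V → C → C → Prop} {C' : Finset C}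

theorem vetoScore_le_of_forall_le_numBelow
    (hmono : ∀ i j : ℕ, i ≤ j → j < ℓ → as i ≤ as j) (htop : as (ℓ - 1) < a) {c p : C}
    (hp : ∀ v, ℓ ≤ numBelow (pref v) C' p) :
    vetoScore ℓ a as pref C' c ≤ vetoScore ℓ a as pref C' p := by
  rw [vetoScore_eq_sum, vetoScore_eq_sum, sum_congr rfl fun v _ => vetoPoints_of_le (hp v)]
  exact sum_le_sum fun v _ => vetoPoints_le hmono htop _

theorem vetoScore_lt_of_numBelow_lt
    (hmono : ∀ i j : ℕ, i ≤ j → j < ℓ → as i ≤ as j) (htop : as (ℓ - 1) < a) {c p : C}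
    (hc : ∀ v, ℓ ≤ numBelow (pref v) C' c) {v : V}
    (hv : numBelow (pref v) C' p < ℓ) :
    vetoScore ℓ a as pref C' p < vetoScore ℓ a as pref C' c := by
  rw [vetoScore_eq_sum, vetoScore_eq_sum, sum_congr rfl fun v _ => vetoPoints_of_le (hc v)]
  exact sum_lt_sum (fun w _ => vetoPoints_le hmono htop _)
    ⟨v, mem_univ v, vetoPoints_lt_of_lt hmono htop hv⟩

end Scores

theorem veto_necessary_president_iff_many_parties_general
    {C V : Type*} [Fintype C] [Fintype V]
    (ℓ : ℕ) (a : ℤ) (as : ℕ → ℤ)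
    (hmono : ∀ i j : ℕ, i ≤ j → j < ℓ → as i ≤ as j)
    (htop : as (ℓ - 1) < a)
    (pref : V → C → C → Prop) (hpref : ∀ v : V, IsStrictTotalOrder C (pref v))
    (Ps : Finset (Finset C)) (hpart : IsPartition Ps)
    (P : Finset C) (hP : P ∈ Ps) (p : C) (hp : p ∈ P)
    (hτ : ℓ * (Finset.univ.image fun v : V => pref v).card < Ps.card) :
    NecessaryPresidentVeto ℓ a as pref Ps p ↔
      ∀ v : V,
        ((Ps \ {P}).filter fun Pt => ∃ c ∈ Pt, pref v c p).card < Ps.card - ℓ := by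
  constructor
  · intro hnec v
    by_contra! hmany
    obtain ⟨C', hnom, hpC', habove⟩ :=
      exists_isNomineeSet_card_filter_ge hpart hP hp fun c => pref v c p
    have hsplit := numBelow_add_card_filter_add_one (r := pref v) hpC'
    have hcard := hnom.card_eq hpart
    have hlow : numBelow (pref v) C' p < ℓ := by omega
    obtain ⟨c, hc, hhigh⟩ := exists_forall_le_numBelow_of_mul_card_lt (s := C')
      (forall_mem_image.2 fun w _ => hpref w) (hcard ▸ hτ)
    exact (hnec C' hnom hpC' c hc).not_gt <| vetoScore_lt_of_numBelow_lt hmono htop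
      (fun w => hhigh _ (mem_image_of_mem _ (mem_univ w))) hlow
  · intro hfew C' hnom hpC' c _
    refine vetoScore_le_of_forall_le_numBelow hmono htop fun v => ?_
    have hsplit := numBelow_add_card_filter_add_one (r := pref v) hpC'
    have habove := hnom.card_filter_le hpart hP hp hpC' (q := (pref v · p)) (irrefl_of _ p)
    have hv := hfew v
    have hcard := hnom.card_eq hpart
    omega

/-- for a Veto-like rule, if the number `t` of parties exceeds `ℓ·τ`,
then `p` is a necessary president iff for every voter `v`, fewer than `t − ℓ`
parties other than `P` contain a candidate preferred to `p` by `v`. -/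
theorem veto_necessary_president_iff_many_parties
    {C V : Type*} [Fintype C] [Fintype V]
    (ℓ : ℕ) (hℓ : 1 ≤ ℓ) (a : ℤ) (as : ℕ → ℤ)
    (hmono : ∀ i j : ℕ, i ≤ j → j < ℓ → as i ≤ as j)
    (htop : as (ℓ - 1) < a)
    (pref : V → C → C → Prop) (hpref : ∀ v : V, IsStrictTotalOrder C (pref v))
    (Ps : Finset (Finset C)) (hpart : IsPartition Ps)
    (P : Finset C) (hP : P ∈ Ps) (p : C) (hp : p ∈ P)
    (hτ : ℓ * (Finset.univ.image fun v : V => pref v).card < Ps.card) :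
    NecessaryPresidentVeto ℓ a as pref Ps p ↔
      ∀ v : V,
        ((Ps \ {P}).filter fun Pt => ∃ c ∈ Pt, pref v c p).card < Ps.card - ℓ :=
  veto_necessary_president_iff_many_parties_general ℓ a as hmono htop pref hpref Ps hpart P hP p hp
    hτ
end
end
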